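/- Let l ∈ ℕ, (ρ,σ) ∈ 𝔙⁰ and let P, Q, R ∈ A₁⁽ˡ⁾ be nonzero with [P,Q]_{ρ,σ} = ℓ_{ρ,σ}(R). Then: (1) st_{ρ,σ}(P) × st_{ρ,σ}(Q) ≠ 0 if and only if st_{ρ,σ}(P) + st_{ρ,σ}(Q) − (1,1) = st_{ρ,σ}(R); (2) en_{ρ,σ}(P) × en_{ρ,σ}(Q) ≠ 0 if and only if en_{ρ,σ}(P) + en_{ρ,σ}(Q) − (1,1) = en_{ρ,σ}(R). -/

import Mathlib

open scoped BigOperators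
open scoped Classical

noncomputable section

namespace Dixmier

variable (K : Type*) [Field K] [CharZero K]

/-- Laurent polynomials `K[t,t⁻¹]`. -/
abbrev Laur (K : Type*) [Field K] := LaurentPolynomial K

/-- The `K`-linear endomorphisms of `K[t,t⁻¹]`. -/
abbrev E (K : Type*) [Field K] := Module.End K (Laur K)

/-- Multiplication by `t^i`, i.e. the element `X^{i/l}` of `A₁⁽ˡ⁾`. -/
def Xpow (i : ℤ) : E K := LinearMap.mulLeft K (LaurentPolynomial.T i)

/-- The operator `Y = (1/l)·t^{1-l}·d/dt` of `A₁⁽ˡ⁾`; it maps `t^n ↦ (n/l)·t^{n-l}`. -/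
def Yop (l : ℕ) : E K :=
  (Finsupp.linearCombination K fun n : ℤ =>
    algebraMap ℚ K ((n : ℚ) / (l : ℚ)) • LaurentPolynomial.T (n - (l : ℤ))) ∘ₗ
    (AddMonoidAlgebra.coeffLinearEquiv K).toLinearMap

/-- The algebra `A₁⁽ˡ⁾`: the subalgebra of endomorphisms of `K[t,t⁻¹]` generated by
multiplication by `t`, multiplication by `t⁻¹`, and `Y`. -/
def A1 (l : ℕ) : Subalgebra K (E K) :=
  Algebra.adjoin K {Xpow K 1, Xpow K (-1), Yop K l}

/-- The Weyl algebra `A₁`, identified with its copy inside `A₁⁽¹⁾`. -/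
def Weyl : Subalgebra K (E K) :=
  Algebra.adjoin K {Xpow K 1, Yop K 1}

/-- Interpretation of a coefficient family: `f ↦ ∑ f (i,j) • X^{i/l} Y^j`. -/
def toEnd (l : ℕ) : ((ℤ × ℕ) →₀ K) →ₗ[K] E K :=
  Finsupp.linearCombination K fun p : ℤ × ℕ => Xpow K p.1 * Yop K l ^ p.2

/-- The (unique) coefficient family representing `P ∈ A₁⁽ˡ⁾`. -/
def rep (l : ℕ) (P : E K) : (ℤ × ℕ) →₀ K :=
  if h : ∃ f, toEnd K l f = P then h.choose else 0

/-- The point `(i/l, j) ∈ ℚ²` attached to an exponent pair `(i,j)`. -/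
def pt (l : ℕ) (p : ℤ × ℕ) : ℚ × ℚ := ((p.1 : ℚ) / (l : ℚ), (p.2 : ℚ))

/-- The set of points `(i/l, j) ∈ ℚ²` in the support of a coefficient family. -/
def suppPts (l : ℕ) (f : (ℤ × ℕ) →₀ K) : Set (ℚ × ℚ) :=
  pt l '' (f.support : Set (ℤ × ℕ))

/-- The support of `P ∈ A₁⁽ˡ⁾`, as a subset of `(1/l)ℤ × ℕ₀ ⊆ ℚ²`. -/
def Supp (l : ℕ) (P : E K) : Set (ℚ × ℚ) := suppPts K l (rep K l P)

/-- `v_{ρ,σ}` on points of `ℚ²`. -/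
def vp (ρ σ : ℤ) (q : ℚ × ℚ) : ℚ := ρ * q.1 + σ * q.2

/-- `v_{ρ,σ}(P) ∈ WithBot ℚ` (with `v_{ρ,σ}(0) = ⊥ = -∞`). -/
def vdeg (ρ σ : ℤ) (l : ℕ) (P : E K) : WithBot ℚ :=
  (rep K l P).support.sup fun p => (vp ρ σ (pt l p) : WithBot ℚ)

/-- The coefficient family of the `(ρ,σ)`-leading part of `P`. -/
def ltRep (ρ σ : ℤ) (l : ℕ) (P : E K) : (ℤ × ℕ) →₀ K :=
  (rep K l P).filter fun p => (vp ρ σ (pt l p) : WithBot ℚ) = vdeg K ρ σ l P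

/-- The commutative algebra `L⁽ˡ⁾ = K[x^{1/l}, x^{-1/l}, y]`; the monomial `x^{i/l}·y^j`
corresponds to the exponent pair `(i,j) ∈ ℤ × ℕ`. -/
abbrev Lalg (K : Type*) [Field K] := AddMonoidAlgebra K (ℤ × ℕ)

/-- The `(ρ,σ)`-leading term `ℓ_{ρ,σ}(P) ∈ L⁽ˡ⁾`. -/
def ell (ρ σ : ℤ) (l : ℕ) (P : E K) : Lalg K := AddMonoidAlgebra.ofCoeff (ltRep K ρ σ l P)

/-- `R ∈ L⁽ˡ⁾` is `(ρ,σ)`-homogeneous: it is `0` or equal to its own leading term. -/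
def IsHomogL (ρ σ : ℤ) (l : ℕ) (R : Lalg K) : Prop :=
  ∀ p ∈ R.coeff.support, ∀ q ∈ R.coeff.support, vp ρ σ (pt l p) = vp ρ σ (pt l q)

/-- `F ∈ A₁⁽ˡ⁾` is `(ρ,σ)`-homogeneous. -/
def IsHomogE (ρ σ : ℤ) (l : ℕ) (F : E K) : Prop :=
  ∀ p ∈ (rep K l F).support, ∀ q ∈ (rep K l F).support,
    vp ρ σ (pt l p) = vp ρ σ (pt l q)

/-- `q` is the point of `Supp(ℓ_{ρ,σ}(P))` at which `v_{1,-1}` is maximal. -/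
def IsStOf (ρ σ : ℤ) (l : ℕ) (P : E K) (q : ℚ × ℚ) : Prop :=
  q ∈ suppPts K l (ltRep K ρ σ l P) ∧
    ∀ q' ∈ suppPts K l (ltRep K ρ σ l P), vp 1 (-1) q' ≤ vp 1 (-1) q

/-- `st_{ρ,σ}(P)`. -/
def stP (ρ σ : ℤ) (l : ℕ) (P : E K) : ℚ × ℚ :=
  if h : ∃ q, IsStOf K ρ σ l P q then h.choose else 0

/-- `q` is the point of `Supp(ℓ_{ρ,σ}(P))` at which `v_{-1,1}` is maximal. -/
def IsEnOf (ρ σ : ℤ) (l : ℕ) (P : E K) (q : ℚ × ℚ) : Prop :=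
  q ∈ suppPts K l (ltRep K ρ σ l P) ∧
    ∀ q' ∈ suppPts K l (ltRep K ρ σ l P), vp (-1) 1 q' ≤ vp (-1) 1 q

/-- `en_{ρ,σ}(P)`. -/
def enP (ρ σ : ℤ) (l : ℕ) (P : E K) : ℚ × ℚ :=
  if h : ∃ q, IsEnOf K ρ σ l P q then h.choose else 0

/-- `w(P)`: the point of `Supp(ℓ_{1,-1}(P))` with maximal first coordinate. -/
def IsWOf (l : ℕ) (P : E K) (q : ℚ × ℚ) : Prop :=
  q ∈ suppPts K l (ltRep K 1 (-1) l P) ∧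
    ∀ q' ∈ suppPts K l (ltRep K 1 (-1) l P), q'.1 ≤ q.1

def wP (l : ℕ) (P : E K) : ℚ × ℚ :=
  if h : ∃ q, IsWOf K l P q then h.choose else 0

/-- `w̄(P)`: the point of `Supp(ℓ_{-1,1}(P))` with maximal first coordinate. -/
def IsWBarOf (l : ℕ) (P : E K) (q : ℚ × ℚ) : Prop :=
  q ∈ suppPts K l (ltRep K (-1) 1 l P) ∧
    ∀ q' ∈ suppPts K l (ltRep K (-1) 1 l P), q'.1 ≤ q.1

def wBarP (l : ℕ) (P : E K) : ℚ × ℚ :=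
  if h : ∃ q, IsWBarOf K l P q then h.choose else 0

/-- The cross product `A × B` on `ℚ²`. -/
def cross (A B : ℚ × ℚ) : ℚ := A.1 * B.2 - A.2 * B.1

/-- The set of directions `𝔙̄`. -/
def VBar (ρ σ : ℤ) : Prop := Int.gcd ρ σ = 1 ∧ 0 ≤ ρ + σ

/-- The set of directions `𝔙`. -/
def V (ρ σ : ℤ) : Prop := Int.gcd ρ σ = 1 ∧ 0 < ρ + σ

/-- The set of directions `𝔙⁰`. -/
def V0 (ρ σ : ℤ) : Prop := V ρ σ ∧ 0 < ρ

/-- The order on directions: `(1,-1)` is smallest, `(-1,1)` is largest, and otherwise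
`(ρ,σ) < (ρ',σ')` iff `ρσ' - σρ' > 0`. -/
def dirLt (ρ σ ρ' σ' : ℤ) : Prop :=
  ((ρ, σ) = ((1 : ℤ), (-1 : ℤ)) ∧ (ρ', σ') = ((-1 : ℤ), (1 : ℤ))) ∨ 0 < ρ * σ' - σ * ρ'

/-- The commutator `[P,Q] = PQ - QP`. -/
def brk (P Q : E K) : E K := P * Q - Q * P

/-- `P` and `Q` are `(ρ,σ)`-proportional:
`v_{ρ,σ}([P,Q]) < v_{ρ,σ}(P) + v_{ρ,σ}(Q) - (ρ+σ)`. -/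
def Proportional (ρ σ : ℤ) (l : ℕ) (P Q : E K) : Prop :=
  vdeg K ρ σ l (brk K P Q) + (((ρ : ℚ) + (σ : ℚ) : ℚ) : WithBot ℚ)
    < vdeg K ρ σ l P + vdeg K ρ σ l Q

/-- The `(ρ,σ)`-bracket `[P,Q]_{ρ,σ} ∈ L⁽ˡ⁾`. -/
def rsBrk (ρ σ : ℤ) (l : ℕ) (P Q : E K) : Lalg K :=
  if Proportional K ρ σ l P Q then 0 else ell K ρ σ l (brk K P Q)

/-- `(ρ,σ) ∈ Dir(P)`. -/
def InDir (ρ σ : ℤ) (l : ℕ) (P : E K) : Prop :=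
  V ρ σ ∧ 1 < (ltRep K ρ σ l P).support.card

/-- `(ρ,σ) ∈ Dir̄(P)`. -/
def InDirBar (ρ σ : ℤ) (l : ℕ) (P : E K) : Prop :=
  InDir K ρ σ l P ∨ (ρ, σ) = ((1 : ℤ), (-1 : ℤ)) ∨ (ρ, σ) = ((-1 : ℤ), (1 : ℤ))

/-- The minimal second exponent occurring in a coefficient family. -/
def minSnd (f : (ℤ × ℕ) →₀ K) : ℕ :=
  if h : f.support.Nonempty then (f.support.image Prod.snd).min' (h.image _) else 0

/-- The univariate polynomial `f_{P,ρ,σ} ∈ K[x]`: writing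
`ℓ_{ρ,σ}(P) = ∑_{i=0}^{γ} a_i·x^{r/l - iσ/ρ}·y^{s+i}`, it is `∑ a_i·xⁱ`. -/
def fPol (ρ σ : ℤ) (l : ℕ) (P : E K) : Polynomial K :=
  ∑ p ∈ (ltRep K ρ σ l P).support,
    Polynomial.C (ltRep K ρ σ l P p) *
      Polynomial.X ^ (p.2 - minSnd K (ltRep K ρ σ l P))

/-- The total degree `v_{1,1}(P)` of an element of the Weyl algebra, as a natural number. -/
def tdeg (P : E K) : ℕ :=
  (rep K 1 P).support.sup fun p => p.1.toNat + p.2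

/-- `(P,Q)` is a counterexample to the Dixmier conjecture: `[Q,P] = 1` but `P` and `Q`
do not generate the Weyl algebra `A₁` over `K`. -/
def IsCounterexample (P Q : E K) : Prop :=
  P ∈ Weyl K ∧ Q ∈ Weyl K ∧ brk K Q P = 1 ∧ Algebra.adjoin K {P, Q} ≠ Weyl K

/-- A minimal pair: a counterexample minimizing `gcd(v_{1,1}(P), v_{1,1}(Q))`. -/
def IsMinimalPair (P Q : E K) : Prop :=
  IsCounterexample K P Q ∧
    ∀ P' Q' : E K, IsCounterexample K P' Q' →
      Nat.gcd (tdeg K P) (tdeg K Q) ≤ Nat.gcd (tdeg K P') (tdeg K Q')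

/-- `P` is subrectangular (with some vertex `(a,b) ∈ ℕ × ℕ`). -/
def Subrectangular (P : E K) : Prop :=
  ∃ a b : ℕ, 0 < a ∧ 0 < b ∧ ((a : ℚ), (b : ℚ)) ∈ Supp K 1 P ∧
    ∀ q ∈ Supp K 1 P, 0 ≤ q.1 ∧ q.1 ≤ (a : ℚ) ∧ 0 ≤ q.2 ∧ q.2 ≤ (b : ℚ)

/-- A standard minimal pair. -/
def IsStandardMinimalPair (P Q : E K) : Prop :=
  IsMinimalPair K P Q ∧ Subrectangular K P ∧ Subrectangular K Q ∧
    vp 1 (-1) (stP K 1 0 1 P) < 0 ∧ vp 1 (-1) (stP K 1 0 1 Q) < 0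

/-- The commutative algebra of "polynomials" with exponents in `ℚ²`, used to express
monomials such as `x^{r/l - iσ/ρ}·y^{s+i}`. -/
abbrev LQ (K : Type*) [Field K] := AddMonoidAlgebra K (ℚ × ℚ)

/-- The embedding of `L⁽ˡ⁾` into `LQ`, sending `x^{i/l}·y^j` to the monomial with
exponent `(i/l, j)`. -/
def toLQ (l : ℕ) (R : Lalg K) : LQ K := AddMonoidAlgebra.ofCoeff (Finsupp.mapDomain (pt l) R.coeff)

/-- The generalized binomial coefficient `binom(q,k) = q(q-1)⋯(q-k+1)/k!`. -/
def qchoose (q : ℚ) (k : ℕ) : ℚ :=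
  (∏ m ∈ Finset.range k, (q - (m : ℚ))) / (k.factorial : ℚ)

end Dixmier

end

/-!
Write elements of `A₁⁽ˡ⁾` in the normal form `∑ a_{i,j} X^{i/l} Y^j`; it is unique because on
`t^{ml}` the operator `Y^j` acts by the falling factorial `m(m-1)⋯(m-j+1)`. By the Leibniz rule,
the product of the monomials with exponents `p` and `q` is the monomial `p + q` plus terms with
exponents `p + q - k(1,1)`, `k ≥ 1`. The first part is commutative, so every term of `[P,Q]` has
`v_{ρ,σ} ≤ v_{ρ,σ}(P) + v_{ρ,σ}(Q) - (ρ+σ)`.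

Order points by the additive, injective key `(v_{ρ,σ}, v_{1,-1})`, lexicographically (for `en`
use `v_{-1,1}`). The largest keys in the supports of `P` and `Q` sit at `st(P)` and `st(Q)`, and
the only term of `[P,Q]` reaching the key of `s = st(P) + st(Q) - (1,1)` is the term `k = 1` of
the two extremal monomials, whose coefficient is `-(st(P) × st(Q))` times their coefficients.
So if the cross product is nonzero then `s = st([P,Q]) = st(R)`, and otherwise `s` is not even in
the support of `[P,Q]`.
-/

namespace Dixmier

open LaurentPolynomial Finset

section Exponents

theorem descPochhammer_succ_smeval (k : ℕ) (a : ℚ) :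
    (descPochhammer ℤ (k + 1)).smeval a = (descPochhammer ℤ k).smeval a * (a - k) := by
  simp [descPochhammer_succ_right, Polynomial.smeval_mul, Polynomial.smeval_natCast]

/-- Exponent of the `k`-th term in `monomial_mul`, the product of the monomials with exponents
`p` and `q`. -/
def mulExp (l : ℕ) (p q : ℤ × ℕ) (k : ℕ) : ℤ × ℕ := (p.1 + q.1 - k * l, p.2 + q.2 - k)

noncomputable def mulCoef (l : ℕ) (p q : ℤ × ℕ) (k : ℕ) : ℚ :=
  p.2.choose k * (descPochhammer ℤ k).smeval ((q.1 : ℚ) / l)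

theorem mulExp_comm (l : ℕ) (p q : ℤ × ℕ) (k : ℕ) : mulExp l p q k = mulExp l q p k := by
  simp only [mulExp, add_comm]

/-- For `(α, β) = (1, -1)` (resp. `(-1, 1)`), the support point of `P` of largest key gives
`st_{ρ,σ}(P)` (resp. `en_{ρ,σ}(P)`). -/
def lexKey (ρ σ α β : ℤ) : ℚ × ℚ →+ ℚ ×ₗ ℚ where
  toFun q := toLex (vp ρ σ q, vp α β q)
  map_zero' := by simp [vp]
  map_add' u v := by
    simp only [vp, Prod.fst_add, Prod.snd_add, ← toLex_add, Prod.mk_add_mk]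
    congr 2 <;> ring

theorem lexKey_apply (ρ σ α β : ℤ) (q : ℚ × ℚ) :
    lexKey ρ σ α β q = toLex (vp ρ σ q, vp α β q) := rfl

variable {ρ σ α β : ℤ} {l : ℕ}

theorem lexKey_injective (h : ρ * β - σ * α ≠ 0) :
    Function.Injective (lexKey ρ σ α β) := by
  refine (injective_iff_map_eq_zero _).mpr fun q hq => ?_
  have h' : (ρ * β - σ * α : ℚ) ≠ 0 := by exact_mod_cast h
  rw [lexKey_apply, ← toLex_zero, toLex_inj, Prod.mk_eq_zero] at hq
  obtain ⟨h1, h2⟩ := hq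
  simp only [vp] at h1 h2
  refine Prod.ext (mul_left_cancel₀ h' ?_) (mul_left_cancel₀ h' ?_)
  · rw [Prod.fst_zero, mul_zero]
    linear_combination (β : ℚ) * h1 - σ * h2
  · rw [Prod.snd_zero, mul_zero]
    linear_combination (ρ : ℚ) * h2 - α * h1

theorem lexKey_one_one_pos (hρσ : 0 < ρ + σ) :
    0 < lexKey ρ σ α β (1, 1) := by
  rw [lexKey_apply, ← toLex_zero, Prod.Lex.toLex_lt_toLex]
  left
  simp only [vp, Prod.fst_zero]
  exact_mod_cast (by simpa using hρσ : (0 : ℤ) < ρ * 1 + σ * 1)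

theorem pt_injective (hl : l ≠ 0) : Function.Injective (pt l) := by
  intro p q h
  have hl' : (l : ℚ) ≠ 0 := Nat.cast_ne_zero.mpr hl
  simp only [pt, Prod.mk.injEq, div_left_inj' hl', Int.cast_inj, Nat.cast_inj] at h
  exact Prod.ext h.1 h.2

theorem pt_mulExp (hl : l ≠ 0) (p q : ℤ × ℕ) {k : ℕ} (hk : k ≤ p.2 + q.2) :
    pt l (mulExp l p q k) = pt l p + pt l q - k • (1, 1) := by
  have hl' : (l : ℚ) ≠ 0 := Nat.cast_ne_zero.mpr hl
  simp only [pt, mulExp, Prod.smul_mk, nsmul_eq_mul, mul_one, Prod.mk_add_mk, Prod.mk_sub_mk]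
  congr 1
  · push_cast
    field_simp
  · push_cast [hk]
    ring

theorem lexKey_mulExp_le (hρσ : 0 < ρ + σ) (hl : l ≠ 0) {p q pf qf : ℤ × ℕ} {k : ℕ}
    (hp : lexKey ρ σ α β (pt l p) ≤ lexKey ρ σ α β (pt l pf))
    (hq : lexKey ρ σ α β (pt l q) ≤ lexKey ρ σ α β (pt l qf)) (hk₁ : 1 ≤ k)
    (hk : k ≤ p.2 + q.2) :
    lexKey ρ σ α β (pt l (mulExp l p q k)) ≤
      lexKey ρ σ α β (pt l pf + pt l qf - (1, 1)) := by
  rw [pt_mulExp hl p q hk, map_sub, map_sub, map_add, map_add, map_nsmul]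
  refine sub_le_sub (add_le_add hp hq) ?_
  simpa using nsmul_le_nsmul_left (lexKey_one_one_pos (α := α) (β := β) hρσ).le hk₁

/-- The key is additive and injective, and each step in `k` lowers `v_{ρ,σ}` by `ρ + σ > 0`. -/
theorem eq_of_lexKey_le_lexKey_mulExp (hdet : ρ * β - σ * α ≠ 0) (hρσ : 0 < ρ + σ)
    (hl : l ≠ 0) {p q pf qf : ℤ × ℕ} {k : ℕ}
    (hp : lexKey ρ σ α β (pt l p) ≤ lexKey ρ σ α β (pt l pf))
    (hq : lexKey ρ σ α β (pt l q) ≤ lexKey ρ σ α β (pt l qf)) (hk₁ : 1 ≤ k)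
    (hk : k ≤ p.2 + q.2)
    (h : lexKey ρ σ α β (pt l pf + pt l qf - (1, 1)) ≤
      lexKey ρ σ α β (pt l (mulExp l p q k))) :
    p = pf ∧ q = qf ∧ k = 1 := by
  obtain ⟨j, rfl⟩ := Nat.exists_eq_add_of_le' hk₁
  have hu : 0 < lexKey ρ σ α β (1, 1) := lexKey_one_one_pos hρσ
  rw [pt_mulExp hl p q hk, map_sub, map_sub, map_add, map_add, map_nsmul, succ_nsmul,
    ← sub_sub, sub_le_sub_iff_right, le_sub_iff_add_le] at h
  have hsum := add_le_add hp hq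
  have hj : j = 0 := by
    by_contra hj
    exact (lt_add_of_pos_right _ (nsmul_pos hu hj)).not_ge (h.trans hsum)
  subst hj
  rw [zero_nsmul, add_zero] at h
  obtain ⟨hp', hq'⟩ := (add_eq_add_iff_eq_and_eq hp hq).mp (le_antisymm hsum h)
  exact ⟨pt_injective hl (lexKey_injective hdet hp'), pt_injective hl (lexKey_injective hdet hq'),
    rfl⟩

end Exponents

section Operators

variable {K : Type*} [Field K]

theorem endExt {F G : E K} (h : ∀ n : ℤ, F (T n) = G (T n)) : F = G := by
  refine AddMonoidAlgebra.lhom_ext' fun n => LinearMap.ext fun b => ?_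
  have hb : (AddMonoidAlgebra.lsingle (R := K) n b : Laur K) = b • T n := by
    rw [AddMonoidAlgebra.lsingle_apply, LaurentPolynomial.T, AddMonoidAlgebra.smul_single,
      smul_eq_mul, mul_one]
  simp only [LinearMap.comp_apply, hb, map_smul, h]

@[simp] theorem Xpow_T (i n : ℤ) : Xpow K i (T n) = T (i + n) := by
  rw [Xpow, LinearMap.mulLeft_apply, ← T_add]

theorem Xpow_add (i j : ℤ) : Xpow K (i + j) = Xpow K i * Xpow K j :=
  endExt fun n => by simp [Module.End.mul_apply, add_assoc]

@[simp] theorem Xpow_zero : Xpow K 0 = 1 :=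
  endExt fun n => by simp

noncomputable def convRep (f g : (ℤ × ℕ) →₀ K) : (ℤ × ℕ) →₀ K :=
  f.sum fun p a => g.sum fun q b => Finsupp.single (p + q) (a * b)

theorem convRep_comm (f g : (ℤ × ℕ) →₀ K) : convRep f g = convRep g f := by
  rw [convRep, convRep, Finsupp.sum_comm]
  simp only [add_comm, mul_comm]

def IsLexMax (ρ σ α β : ℤ) (l : ℕ) (f : (ℤ × ℕ) →₀ K) (p : ℤ × ℕ) : Prop :=
  p ∈ f.support ∧
    ∀ q ∈ f.support, lexKey ρ σ α β (pt l q) ≤ lexKey ρ σ α β (pt l p)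

theorem exists_isLexMax (ρ σ α β : ℤ) (l : ℕ) {f : (ℤ × ℕ) →₀ K}
    (hf : f.support.Nonempty) :
    ∃ p, IsLexMax ρ σ α β l f p :=
  f.support.exists_max_image (fun q => lexKey ρ σ α β (pt l q)) hf

def IsMaxPt (α β : ℤ) (l : ℕ) (f : (ℤ × ℕ) →₀ K) (q : ℚ × ℚ) : Prop :=
  q ∈ suppPts K l f ∧ ∀ q' ∈ suppPts K l f, vp α β q' ≤ vp α β q

noncomputable def maxPt (α β : ℤ) (l : ℕ) (f : (ℤ × ℕ) →₀ K) : ℚ × ℚ :=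
  if h : ∃ q, IsMaxPt α β l f q then h.choose else 0

theorem maxPt_mem {α β : ℤ} {l : ℕ} {f : (ℤ × ℕ) →₀ K} (hf : f.support.Nonempty) :
    maxPt α β l f ∈ suppPts K l f := by
  obtain ⟨p, hp, hmax⟩ := f.support.exists_max_image (fun r => vp α β (pt l r)) hf
  have h : ∃ q, IsMaxPt α β l f q :=
    ⟨pt l p, ⟨p, hp, rfl⟩, by rintro _ ⟨r, hr, rfl⟩; exact hmax r hr⟩
  rw [maxPt, dif_pos h]
  exact h.choose_spec.1

variable [CharZero K]

@[simp] theorem Yop_T (l : ℕ) (n : ℤ) :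
    Yop K l (T n) = algebraMap ℚ K ((n : ℚ) / l) • T (n - l) := by
  have : (T n : Laur K).coeff = Finsupp.single n 1 := rfl
  rw [Yop, LinearMap.comp_apply, LinearEquiv.coe_coe, AddMonoidAlgebra.coeffLinearEquiv_apply,
    this, Finsupp.linearCombination_single, one_smul]

theorem Yop_pow_T {l : ℕ} (hl : l ≠ 0) (j : ℕ) (n : ℤ) :
    (Yop K l ^ j) (T n) =
      algebraMap ℚ K ((descPochhammer ℤ j).smeval ((n : ℚ) / l)) • T (n - j * l) := by
  induction j with
  | zero => simp
  | succ j ih =>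
    rw [pow_succ', Module.End.mul_apply, ih, map_smul, Yop_T, smul_smul, ← map_mul,
      descPochhammer_succ_smeval]
    have hl' : (l : ℚ) ≠ 0 := Nat.cast_ne_zero.mpr hl
    rw [show ((n - j * l : ℤ) : ℚ) / l = n / l - j by push_cast; field_simp,
      show n - j * l - l = n - (j + 1 : ℕ) * l by push_cast; ring]

theorem Yop_pow_mul_Xpow {l : ℕ} (hl : l ≠ 0) (j : ℕ) (i : ℤ) :
    Yop K l ^ j * Xpow K i = ∑ k ∈ range (j + 1),
      algebraMap ℚ K (j.choose k * (descPochhammer ℤ k).smeval ((i : ℚ) / l)) •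
        (Xpow K (i - k * l) * Yop K l ^ (j - k)) := by
  refine endExt fun n => ?_
  have hterm : ∀ k ∈ range (j + 1),
      (algebraMap ℚ K (j.choose k * (descPochhammer ℤ k).smeval ((i : ℚ) / l)) •
        (Xpow K (i - k * l) * Yop K l ^ (j - k))) (T n)
      = algebraMap ℚ K (j.choose k * ((descPochhammer ℤ k).smeval ((i : ℚ) / l) *
          (descPochhammer ℤ (j - k)).smeval ((n : ℚ) / l))) • T (i + n - j * l) := by
    intro k hk
    have hkj : k ≤ j := Nat.lt_succ_iff.mp (mem_range.mp hk)
    rw [LinearMap.smul_apply, Module.End.mul_apply, Yop_pow_T hl, map_smul, Xpow_T,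
      smul_smul, ← map_mul, mul_assoc]
    congr 2
    push_cast [hkj]
    ring
  rw [Module.End.mul_apply, Xpow_T, Yop_pow_T hl, LinearMap.sum_apply, sum_congr rfl hterm,
    ← sum_smul, ← map_sum]
  congr 2
  rw [show ((i + n : ℤ) : ℚ) / l = (i : ℚ) / l + (n : ℚ) / l by push_cast; ring,
    Ring.descPochhammer_smeval_add _ (Commute.all _ _),
    Nat.sum_antidiagonal_eq_sum_range_succ_mk]

theorem monomial_mul {l : ℕ} (hl : l ≠ 0) (p q : ℤ × ℕ) :
    Xpow K p.1 * Yop K l ^ p.2 * (Xpow K q.1 * Yop K l ^ q.2)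
      = ∑ k ∈ range (p.2 + 1), algebraMap ℚ K (mulCoef l p q k) •
          (Xpow K (mulExp l p q k).1 * Yop K l ^ (mulExp l p q k).2) := by
  rw [mul_assoc, ← mul_assoc (Yop K l ^ p.2), Yop_pow_mul_Xpow hl, sum_mul, mul_sum]
  refine sum_congr rfl fun k hk => ?_
  have hk : k ≤ p.2 := Nat.lt_succ_iff.mp (mem_range.mp hk)
  rw [smul_mul_assoc, mul_smul_comm, mul_assoc, ← mul_assoc, ← Xpow_add, ← pow_add, mulCoef,
    mulExp]
  congr 3
  · ring
  · omega

theorem toEnd_single (l : ℕ) (p : ℤ × ℕ) (c : K) :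
    toEnd K l (Finsupp.single p c) = c • (Xpow K p.1 * Yop K l ^ p.2) := by
  rw [toEnd, Finsupp.linearCombination_single]

theorem coeff_toEnd_apply_T {l : ℕ} (hl : l ≠ 0) (f : (ℤ × ℕ) →₀ K) (m : ℕ)
    (d : ℤ) :
    ((toEnd K l f) (T (m * l))).coeff (m * l + d)
      = ∑ p ∈ f.support with p.1 - p.2 * l = d, f p * (m.descFactorial p.2 : K) := by
  have hl' : (l : ℚ) ≠ 0 := Nat.cast_ne_zero.mpr hl
  rw [toEnd, Finsupp.linearCombination_apply, Finsupp.sum, LinearMap.sum_apply,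
    AddMonoidAlgebra.coeff_sum, Finsupp.finsetSum_apply, sum_filter]
  refine sum_congr rfl fun p _ => ?_
  rw [LinearMap.smul_apply, Module.End.mul_apply, Yop_pow_T hl, map_smul, Xpow_T,
    show ((m * l : ℤ) : ℚ) / l = (m : ℕ) by push_cast; field_simp,
    Polynomial.descPochhammer_smeval_eq_descFactorial, map_natCast]
  simp only [AddMonoidAlgebra.coeff_smul_apply, LaurentPolynomial.T_apply, smul_eq_mul]
  split_ifs with h1 h2 h2
  · ring
  · exact absurd (by linarith) h2
  · exact absurd (by linarith) h1
  · ring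

/-- Evaluating at `m = j` kills the terms of degree `> j`, so the coefficients vanish by
induction on the degree. -/
theorem eq_zero_of_forall_sum_mul_descFactorial {ι : Type*} {s : Finset ι}
    {deg : ι → ℕ} (hdeg : Set.InjOn deg s) {c : ι → K}
    (h : ∀ m : ℕ, ∑ i ∈ s, c i * (m.descFactorial (deg i) : K) = 0) :
    ∀ i ∈ s, c i = 0 := by
  suffices ∀ j, ∀ i ∈ s, deg i = j → c i = 0 from fun i hi => this _ i hi rfl
  intro j
  induction j using Nat.strong_induction_on with
  | _ j ih =>
    intro i hi hij
    have hj := h j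
    rw [sum_eq_single_of_mem i hi, hij, Nat.descFactorial_self] at hj
    · exact (mul_eq_zero.mp hj).resolve_right (Nat.cast_ne_zero.mpr j.factorial_ne_zero)
    · intro i' hi' hne
      rcases lt_trichotomy (deg i') j with hlt | heq | hgt
      · rw [ih _ hlt i' hi' rfl, zero_mul]
      · exact absurd (hdeg hi' hi (heq.trans hij.symm)) hne
      · rw [Nat.descFactorial_eq_zero_iff_lt.mpr hgt, Nat.cast_zero, mul_zero]

theorem toEnd_injective {l : ℕ} (hl : l ≠ 0) : Function.Injective (toEnd K l) := by
  refine (injective_iff_map_eq_zero _).mpr fun f hf => Finsupp.ext fun p₀ => ?_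
  by_cases hp₀ : p₀ ∈ f.support
  · set d := p₀.1 - p₀.2 * l
    have hinj : Set.InjOn Prod.snd
        (({p ∈ f.support | p.1 - p.2 * l = d} : Finset (ℤ × ℕ)) : Set (ℤ × ℕ)) := by
      intro p hp q hq h
      have hp := (mem_filter.mp hp).2
      have hq := (mem_filter.mp hq).2
      exact Prod.ext (by rw [← h] at hq; omega) h
    refine eq_zero_of_forall_sum_mul_descFactorial hinj (fun m => ?_) p₀
      (mem_filter.mpr ⟨hp₀, rfl⟩)
    rw [← coeff_toEnd_apply_T hl, hf]
    rfl
  · exact Finsupp.notMem_support_iff.mp hp₀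

/-- The terms `k ≥ 1` of `monomial_mul`; the terms `k = 0` make up `convRep`. -/
noncomputable def hotRep (l : ℕ) (f g : (ℤ × ℕ) →₀ K) : (ℤ × ℕ) →₀ K :=
  f.sum fun p a => g.sum fun q b => ∑ k ∈ Ico 1 (p.2 + 1),
    Finsupp.single (mulExp l p q k) (a * b * algebraMap ℚ K (mulCoef l p q k))

theorem hotRep_apply (l : ℕ) (f g : (ℤ × ℕ) →₀ K) (r : ℤ × ℕ) :
    hotRep l f g r = ∑ p ∈ f.support, ∑ q ∈ g.support, ∑ k ∈ Ico 1 (p.2 + 1),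
      if mulExp l p q k = r then f p * g q * algebraMap ℚ K (mulCoef l p q k) else 0 := by
  simp only [hotRep, Finsupp.sum, Finsupp.finsetSum_apply, Finsupp.single_apply]

theorem toEnd_convRep_add_hotRep {l : ℕ} (hl : l ≠ 0) (f g : (ℤ × ℕ) →₀ K) :
    toEnd K l (convRep f g + hotRep l f g) = toEnd K l f * toEnd K l g := by
  simp only [convRep, hotRep, ← Finsupp.sum_add, map_finsuppSum, map_add, map_sum, toEnd_single]
  rw [toEnd, Finsupp.linearCombination_apply, Finsupp.linearCombination_apply, Finsupp.sum_mul]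
  refine Finsupp.sum_congr fun p _ => ?_
  rw [Finsupp.mul_sum]
  refine Finsupp.sum_congr fun q _ => ?_
  rw [smul_mul_smul_comm, monomial_mul hl, sum_range_eq_add_Ico _ (Nat.succ_pos _), smul_add,
    smul_sum]
  congr 1
  · simp [mulCoef, mulExp]
  · refine sum_congr rfl fun k _ => ?_
    rw [smul_smul]

theorem toEnd_hotRep_sub_hotRep {l : ℕ} (hl : l ≠ 0) (f g : (ℤ × ℕ) →₀ K) :
    toEnd K l (hotRep l f g - hotRep l g f) =
      toEnd K l f * toEnd K l g - toEnd K l g * toEnd K l f := by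
  rw [← toEnd_convRep_add_hotRep hl, ← toEnd_convRep_add_hotRep hl, convRep_comm g f, map_sub,
    map_add, map_add]
  abel

noncomputable def toEndRange {l : ℕ} (hl : l ≠ 0) : Subalgebra K (E K) where
  carrier := Set.range (toEnd K l)
  add_mem' := by rintro _ _ ⟨f, rfl⟩ ⟨g, rfl⟩; exact ⟨f + g, map_add _ _ _⟩
  mul_mem' := by
    rintro _ _ ⟨f, rfl⟩ ⟨g, rfl⟩; exact ⟨_, toEnd_convRep_add_hotRep hl f g⟩
  algebraMap_mem' c :=
    ⟨Finsupp.single (0, 0) c, by simp [toEnd_single, Algebra.algebraMap_eq_smul_one]⟩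

theorem A1_le_toEndRange {l : ℕ} (hl : l ≠ 0) : A1 K l ≤ toEndRange hl := by
  refine Algebra.adjoin_le ?_
  rintro x (rfl | rfl | rfl)
  · exact ⟨Finsupp.single (1, 0) 1, by simp [toEnd_single]⟩
  · exact ⟨Finsupp.single (-1, 0) 1, by simp [toEnd_single]⟩
  · exact ⟨Finsupp.single (0, 1) 1, by simp [toEnd_single]⟩

theorem rep_toEnd {l : ℕ} (hl : l ≠ 0) (f : (ℤ × ℕ) →₀ K) :
    rep K l (toEnd K l f) = f := by
  have h : ∃ g, toEnd K l g = toEnd K l f := ⟨f, rfl⟩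
  rw [rep, dif_pos h]
  exact toEnd_injective hl h.choose_spec

theorem toEnd_rep {l : ℕ} (hl : l ≠ 0) {P : E K} (hP : P ∈ A1 K l) :
    toEnd K l (rep K l P) = P := by
  have h : ∃ f, toEnd K l f = P := A1_le_toEndRange hl hP
  rw [rep, dif_pos h]
  exact h.choose_spec

theorem rep_brk {l : ℕ} (hl : l ≠ 0) {P Q : E K} (hP : P ∈ A1 K l) (hQ : Q ∈ A1 K l) :
    rep K l (brk K P Q) = hotRep l (rep K l P) (rep K l Q) - hotRep l (rep K l Q) (rep K l P) := by
  rw [← rep_toEnd hl (hotRep l _ _ - _), toEnd_hotRep_sub_hotRep hl, toEnd_rep hl hP,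
    toEnd_rep hl hQ, brk]

theorem rep_support_nonempty {l : ℕ} (hl : l ≠ 0) {P : E K} (hP : P ∈ A1 K l)
    (hP0 : P ≠ 0) :
    (rep K l P).support.Nonempty :=
  Finsupp.support_nonempty_iff.mpr fun h => hP0 (by rw [← toEnd_rep hl hP, h, map_zero])

section LeadingTerms

variable {ρ σ α β : ℤ} {l : ℕ}

variable {f g : (ℤ × ℕ) →₀ K} {pf qf : ℤ × ℕ}

theorem lexKey_le_of_hotRep_ne_zero (hρσ : 0 < ρ + σ) (hl : l ≠ 0)
    (hf : IsLexMax ρ σ α β l f pf) (hg : IsLexMax ρ σ α β l g qf) {r : ℤ × ℕ}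
    (h : hotRep l f g r ≠ 0) :
    lexKey ρ σ α β (pt l r) ≤ lexKey ρ σ α β (pt l pf + pt l qf - (1, 1)) := by
  rw [hotRep_apply] at h
  obtain ⟨p, hp, h⟩ := exists_ne_zero_of_sum_ne_zero h
  obtain ⟨q, hq, h⟩ := exists_ne_zero_of_sum_ne_zero h
  obtain ⟨k, hk, h⟩ := exists_ne_zero_of_sum_ne_zero h
  obtain ⟨hk₁, hk₂⟩ := mem_Ico.mp hk
  have hr : mulExp l p q k = r := by_contra fun hne => h (if_neg hne)
  rw [← hr]
  exact lexKey_mulExp_le hρσ hl (hf.2 p hp) (hg.2 q hq) hk₁ (by omega)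

theorem hotRep_apply_of_le (hdet : ρ * β - σ * α ≠ 0) (hρσ : 0 < ρ + σ) (hl : l ≠ 0)
    (hf : IsLexMax ρ σ α β l f pf) (hg : IsLexMax ρ σ α β l g qf) {r : ℤ × ℕ}
    (hr : lexKey ρ σ α β (pt l pf + pt l qf - (1, 1)) ≤ lexKey ρ σ α β (pt l r)) :
    hotRep l f g r = if r = mulExp l pf qf 1
      then f pf * g qf * algebraMap ℚ K (pf.2 * ((qf.1 : ℚ) / l)) else 0 := by
  have hterm : ∀ p ∈ f.support, ∀ q ∈ g.support, ∀ k ∈ Ico 1 (p.2 + 1),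
      (if mulExp l p q k = r then f p * g q * algebraMap ℚ K (mulCoef l p q k) else 0)
        = if p = pf ∧ q = qf ∧ k = 1 ∧ r = mulExp l pf qf 1
          then f pf * g qf * algebraMap ℚ K (pf.2 * ((qf.1 : ℚ) / l)) else 0 := by
    intro p hp q hq k hk
    obtain ⟨hk₁, hk₂⟩ := mem_Ico.mp hk
    by_cases he : mulExp l p q k = r
    · obtain ⟨rfl, rfl, rfl⟩ := eq_of_lexKey_le_lexKey_mulExp hdet hρσ hl (hf.2 p hp)
        (hg.2 q hq) hk₁ (by omega) (he ▸ hr)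
      simp [he, mulCoef]
    · rw [if_neg he, if_neg]
      rintro ⟨rfl, rfl, rfl, rfl⟩
      exact he rfl
  rw [hotRep_apply,
    sum_congr rfl fun p hp => sum_congr rfl fun q hq => sum_congr rfl (hterm p hp q hq)]
  simp only [ite_and, sum_ite_irrel, sum_const_zero, sum_ite_eq', hf.1, hg.1, if_true, mem_Ico,
    le_refl]
  split_ifs with h₁ h₂ <;> try rfl
  simp [show pf.2 = 0 by omega]

theorem lexKey_le_of_hotRep_sub_hotRep_ne_zero (hρσ : 0 < ρ + σ) (hl : l ≠ 0)
    (hf : IsLexMax ρ σ α β l f pf) (hg : IsLexMax ρ σ α β l g qf) {r : ℤ × ℕ}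
    (h : (hotRep l f g - hotRep l g f) r ≠ 0) :
    lexKey ρ σ α β (pt l r) ≤ lexKey ρ σ α β (pt l pf + pt l qf - (1, 1)) := by
  rw [Finsupp.sub_apply] at h
  by_cases hfg : hotRep l f g r = 0
  · rw [add_comm (pt l pf)]
    exact lexKey_le_of_hotRep_ne_zero hρσ hl hg hf fun h' => h (by rw [hfg, h', sub_zero])
  · exact lexKey_le_of_hotRep_ne_zero hρσ hl hf hg hfg

theorem hotRep_sub_hotRep_apply_of_le (hdet : ρ * β - σ * α ≠ 0) (hρσ : 0 < ρ + σ)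
    (hl : l ≠ 0)
    (hf : IsLexMax ρ σ α β l f pf) (hg : IsLexMax ρ σ α β l g qf) {r : ℤ × ℕ}
    (hr : lexKey ρ σ α β (pt l pf + pt l qf - (1, 1)) ≤ lexKey ρ σ α β (pt l r)) :
    (hotRep l f g - hotRep l g f) r = if r = mulExp l pf qf 1
      then -(f pf * g qf * algebraMap ℚ K (cross (pt l pf) (pt l qf))) else 0 := by
  rw [Finsupp.sub_apply, hotRep_apply_of_le hdet hρσ hl hf hg hr,
    hotRep_apply_of_le hdet hρσ hl hg hf (by rwa [add_comm (pt l qf)]), mulExp_comm l qf]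
  split_ifs
  · rw [show cross (pt l pf) (pt l qf) = qf.2 * ((pf.1 : ℚ) / l) - pf.2 * ((qf.1 : ℚ) / l) by
      simp only [cross, pt]; ring, map_sub]
    ring
  · rw [sub_zero]

theorem stP_eq_maxPt (ρ σ : ℤ) (l : ℕ) (P : E K) :
    stP K ρ σ l P = maxPt 1 (-1) l (ltRep K ρ σ l P) := rfl

theorem enP_eq_maxPt (ρ σ : ℤ) (l : ℕ) (P : E K) :
    enP K ρ σ l P = maxPt (-1) 1 l (ltRep K ρ σ l P) := rfl

theorem vdeg_eq_of_forall_le {P : E K} {p : ℤ × ℕ} (hp : p ∈ (rep K l P).support)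
    (h : ∀ r ∈ (rep K l P).support, vp ρ σ (pt l r) ≤ vp ρ σ (pt l p)) :
    vdeg K ρ σ l P = vp ρ σ (pt l p) :=
  le_antisymm (Finset.sup_le fun r hr => WithBot.coe_le_coe.mpr (h r hr))
    (le_sup (f := fun r => (vp ρ σ (pt l r) : WithBot ℚ)) hp)

theorem mem_ltRep_support {P : E K} {p : ℤ × ℕ} :
    p ∈ (ltRep K ρ σ l P).support ↔
      p ∈ (rep K l P).support ∧ (vp ρ σ (pt l p) : WithBot ℚ) = vdeg K ρ σ l P := by
  rw [ltRep, Finsupp.support_filter, mem_filter]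

theorem ltRep_support_nonempty {P : E K} (h : (rep K l P).support.Nonempty) :
    (ltRep K ρ σ l P).support.Nonempty := by
  obtain ⟨p, hp, hmax⟩ := (rep K l P).support.exists_max_image (fun r => vp ρ σ (pt l r)) h
  exact ⟨p, mem_ltRep_support.mpr ⟨hp, (vdeg_eq_of_forall_le hp hmax).symm⟩⟩

theorem suppPts_ltRep_subset (P : E K) :
    suppPts K l (ltRep K ρ σ l P) ⊆ suppPts K l (rep K l P) :=
  Set.image_mono fun _ hp => (mem_ltRep_support.mp hp).1

theorem isMaxPt_ltRep {P : E K} {p : ℤ × ℕ} (hp : IsLexMax ρ σ α β l (rep K l P) p) :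
    IsMaxPt α β l (ltRep K ρ σ l P) (pt l p) := by
  have hle : ∀ r ∈ (rep K l P).support, vp ρ σ (pt l r) ≤ vp ρ σ (pt l p) ∧
      (vp ρ σ (pt l r) = vp ρ σ (pt l p) → vp α β (pt l r) ≤ vp α β (pt l p)) :=
    fun r hr => Prod.Lex.toLex_le_toLex'.mp (hp.2 r hr)
  have hdeg := vdeg_eq_of_forall_le hp.1 fun r hr => (hle r hr).1
  refine ⟨⟨p, mem_ltRep_support.mpr ⟨hp.1, hdeg.symm⟩, rfl⟩, ?_⟩
  rintro _ ⟨r, hr, rfl⟩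
  obtain ⟨hr, hrdeg⟩ := mem_ltRep_support.mp hr
  rw [hdeg, WithBot.coe_inj] at hrdeg
  exact (hle r hr).2 hrdeg

theorem IsMaxPt.eq_of_ltRep (hdet : ρ * β - σ * α ≠ 0) {P : E K} {q q' : ℚ × ℚ}
    (hq : IsMaxPt α β l (ltRep K ρ σ l P) q) (hq' : IsMaxPt α β l (ltRep K ρ σ l P) q') :
    q = q' := by
  obtain ⟨⟨p, hp, rfl⟩, hmax⟩ := hq
  obtain ⟨⟨p', hp', rfl⟩, hmax'⟩ := hq'
  have hv : vp ρ σ (pt l p) = vp ρ σ (pt l p') := by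
    rw [← WithBot.coe_inj, (mem_ltRep_support.mp hp).2, (mem_ltRep_support.mp hp').2]
  refine lexKey_injective hdet ?_
  rw [lexKey_apply, lexKey_apply, hv,
    le_antisymm (hmax' _ ⟨p, hp, rfl⟩) (hmax _ ⟨p', hp', rfl⟩)]

theorem maxPt_ltRep_eq (hdet : ρ * β - σ * α ≠ 0) {P : E K} {q : ℚ × ℚ}
    (hq : IsMaxPt α β l (ltRep K ρ σ l P) q) : maxPt α β l (ltRep K ρ σ l P) = q := by
  have h : ∃ q, IsMaxPt α β l (ltRep K ρ σ l P) q := ⟨q, hq⟩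
  rw [maxPt, dif_pos h]
  exact h.choose_spec.eq_of_ltRep hdet hq

variable {P Q : E K}

theorem isMaxPt_ltRep_brk (hdet : ρ * β - σ * α ≠ 0) (hρσ : 0 < ρ + σ) (hl : l ≠ 0)
    (hP : P ∈ A1 K l) (hQ : Q ∈ A1 K l) (hpf : IsLexMax ρ σ α β l (rep K l P) pf)
    (hqf : IsLexMax ρ σ α β l (rep K l Q) qf) (hc : cross (pt l pf) (pt l qf) ≠ 0) :
    IsMaxPt α β l (ltRep K ρ σ l (brk K P Q)) (pt l pf + pt l qf - (1, 1)) := by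
  have hsum : 1 ≤ pf.2 + qf.2 := by
    by_contra! h
    exact hc (by simp [cross, pt, show pf.2 = 0 by omega, show qf.2 = 0 by omega])
  have hpt : pt l (mulExp l pf qf 1) = pt l pf + pt l qf - (1, 1) := by
    rw [pt_mulExp hl pf qf hsum, one_nsmul]
  rw [← hpt]
  refine isMaxPt_ltRep ⟨?_, fun r hr => ?_⟩
  · rw [rep_brk hl hP hQ, Finsupp.mem_support_iff,
      hotRep_sub_hotRep_apply_of_le hdet hρσ hl hpf hqf (by rw [hpt]), if_pos rfl, neg_ne_zero]
    exact mul_ne_zero (mul_ne_zero (Finsupp.mem_support_iff.mp hpf.1)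
      (Finsupp.mem_support_iff.mp hqf.1)) ((map_ne_zero _).mpr hc)
  · rw [rep_brk hl hP hQ, Finsupp.mem_support_iff] at hr
    rw [hpt]
    exact lexKey_le_of_hotRep_sub_hotRep_ne_zero hρσ hl hpf hqf hr

theorem cross_ne_zero_of_mem_suppPts_brk (hdet : ρ * β - σ * α ≠ 0) (hρσ : 0 < ρ + σ)
    (hl : l ≠ 0) (hP : P ∈ A1 K l) (hQ : Q ∈ A1 K l)
    (hpf : IsLexMax ρ σ α β l (rep K l P) pf) (hqf : IsLexMax ρ σ α β l (rep K l Q) qf)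
    (hs : pt l pf + pt l qf - (1, 1) ∈ suppPts K l (rep K l (brk K P Q))) :
    cross (pt l pf) (pt l qf) ≠ 0 := by
  obtain ⟨r, hr, hrs⟩ := hs
  rw [Finset.mem_coe, rep_brk hl hP hQ, Finsupp.mem_support_iff,
    hotRep_sub_hotRep_apply_of_le hdet hρσ hl hpf hqf (by rw [hrs])] at hr
  intro hc
  simp [hc] at hr

theorem cross_maxPt_ne_zero_iff (hdet : ρ * β - σ * α ≠ 0) (hρσ : 0 < ρ + σ)
    (hl : l ≠ 0)
    (hP : P ∈ A1 K l) (hQ : Q ∈ A1 K l) (hP0 : P ≠ 0) (hQ0 : Q ≠ 0)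
    (hbrk : (ltRep K ρ σ l (brk K P Q)).support.Nonempty) :
    cross (maxPt α β l (ltRep K ρ σ l P)) (maxPt α β l (ltRep K ρ σ l Q)) ≠ 0 ↔
      maxPt α β l (ltRep K ρ σ l P) + maxPt α β l (ltRep K ρ σ l Q) - (1, 1) =
        maxPt α β l (ltRep K ρ σ l (brk K P Q)) := by
  obtain ⟨pf, hpf⟩ := exists_isLexMax ρ σ α β l (rep_support_nonempty hl hP hP0)
  obtain ⟨qf, hqf⟩ := exists_isLexMax ρ σ α β l (rep_support_nonempty hl hQ hQ0)
  rw [maxPt_ltRep_eq hdet (isMaxPt_ltRep hpf), maxPt_ltRep_eq hdet (isMaxPt_ltRep hqf)]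
  refine ⟨fun hc => ?_, fun hs => ?_⟩
  · exact (maxPt_ltRep_eq hdet (isMaxPt_ltRep_brk hdet hρσ hl hP hQ hpf hqf hc)).symm
  · refine cross_ne_zero_of_mem_suppPts_brk hdet hρσ hl hP hQ hpf hqf ?_
    rw [hs]
    exact suppPts_ltRep_subset _ (maxPt_mem hbrk)

end LeadingTerms

theorem ltRep_brk_eq_of_rsBrk_eq {ρ σ : ℤ} {l : ℕ} (hl : l ≠ 0) {P Q R : E K}
    (hR : R ∈ A1 K l) (hR0 : R ≠ 0) (hbr : rsBrk K ρ σ l P Q = ell K ρ σ l R) :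
    ltRep K ρ σ l (brk K P Q) = ltRep K ρ σ l R := by
  have hell : ell K ρ σ l R ≠ 0 := fun h =>
    (ltRep_support_nonempty (rep_support_nonempty hl hR hR0)).ne_empty
      (by rw [Finsupp.support_eq_empty]; exact congrArg AddMonoidAlgebra.coeff h)
  have hprop : ¬Proportional K ρ σ l P Q := fun h => hell (by rw [← hbr, rsBrk, if_pos h])
  rw [rsBrk, if_neg hprop] at hbr
  exact congrArg AddMonoidAlgebra.coeff hbr

end Operators

theorem rsBracket_st_en (K : Type*) [Field K] [CharZero K] (l : ℕ) (hl : 0 < l)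
    (ρ σ : ℤ) (h0 : V0 ρ σ) (P Q R : E K)
    (hP : P ∈ A1 K l) (hQ : Q ∈ A1 K l) (hR : R ∈ A1 K l)
    (hP0 : P ≠ 0) (hQ0 : Q ≠ 0) (hR0 : R ≠ 0)
    (hbr : rsBrk K ρ σ l P Q = ell K ρ σ l R) :
    (cross (stP K ρ σ l P) (stP K ρ σ l Q) ≠ 0 ↔
      stP K ρ σ l P + stP K ρ σ l Q - (1, 1) = stP K ρ σ l R) ∧
    (cross (enP K ρ σ l P) (enP K ρ σ l Q) ≠ 0 ↔
      enP K ρ σ l P + enP K ρ σ l Q - (1, 1) = enP K ρ σ l R) := by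
  have hρσ : 0 < ρ + σ := h0.1.2
  have hltR := ltRep_brk_eq_of_rsBrk_eq hl.ne' hR hR0 hbr
  have hbrk : (ltRep K ρ σ l (brk K P Q)).support.Nonempty :=
    hltR ▸ ltRep_support_nonempty (rep_support_nonempty hl.ne' hR hR0)
  simp only [stP_eq_maxPt, enP_eq_maxPt, ← hltR]
  exact ⟨cross_maxPt_ne_zero_iff (by omega) hρσ hl.ne' hP hQ hP0 hQ0 hbrk,
    cross_maxPt_ne_zero_iff (by omega) hρσ hl.ne' hP hQ hP0 hQ0 hbrk⟩

end Dixmier
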